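/- arXiv:1809.01320 — 2 statements merged into one kernel-verified Lean document; each statement's English description precedes it below -/
import Mathlib

section
/- Correctness of the single-client comparison algorithm: let G be any type and f : List Bool → G an injective function. For n-bit strings m, m', define ciphertext components C_{i,b} = f(E_b(i, m)) and C'_{i,b} = f(E_b(i, m')) for i ∈ [n], b ∈ {0,1}. Then: (1) a smallest index i* with C_{i*,0} ≠ C'_{i*,0} exists if and only if m ≠ m'; (2) when it exists, i* = ind(m, m'), and C_{i*,1} = C'_{i*,0} holds if and only if val(m) < val(m'), while C_{i*,0} = C'_{i*,1} holds if and only if val(m') < val(m). Consequently the comparison algorithm, which outputs 1 if such i* exists with C_{i*,1} = C'_{i*,0} and outputs 0 otherwise, outputs 1 exactly when val(m) < val(m'). -/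
/-- `prefixBits m i` is the list of bits of `m` strictly before index `i`
(the bits `x₁ ⋯ x_{i-1}` in 1-based paper notation). -/
def prefixBits {n : ℕ} (m : Fin n → Bool) (i : Fin n) : List Bool :=
  (List.ofFn m).take i.val

/-- `E0 m i = prefix(m,i) ∥ 0 ∥ xᵢ`. -/
def E0 {n : ℕ} (m : Fin n → Bool) (i : Fin n) : List Bool :=
  prefixBits m i ++ [false, m i]

/-- `E1 m i = prefix(m,i) ∥ (xᵢ + 1)` written as two bits: `01` if `xᵢ = 0`, `10` if `xᵢ = 1`. -/
def E1 {n : ℕ} (m : Fin n → Bool) (i : Fin n) : List Bool :=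
  prefixBits m i ++ (if m i then [true, false] else [false, true])

/-- The numeric value of an `n`-bit string, most significant bit first. -/
def msgVal {n : ℕ} (m : Fin n → Bool) : ℕ :=
  ∑ i : Fin n, if m i then 2 ^ (n - 1 - i.val) else 0

/-- The value of a bit string as a binary integer, most significant bit first. -/
def bitsVal (l : List Bool) : ℕ :=
  l.foldl (fun acc b => 2 * acc + (if b then 1 else 0)) 0

lemma prefixBits_eq_iff {n : ℕ} (m m' : Fin n → Bool) (i : Fin n) :
    prefixBits m i = prefixBits m' i ↔ ∀ k : Fin n, k < i → m k = m' k := by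
  unfold prefixBits
  constructor
  · intro h k hk
    have hk' : k.val < i.val := hk
    have h1 := List.getElem_of_eq h
      (show k.val < ((List.ofFn m).take i.val).length by simp; omega)
    simpa using h1
  · intro h
    apply List.ext_getElem
    · simp
    · intro j h1 h2
      simp only [List.getElem_take, List.getElem_ofFn]
      have hj : j < i.val := by
        simp only [List.length_take, List.length_ofFn, lt_min_iff] at h1
        exact h1.1
      exact h ⟨j, by omega⟩ (by simpa [Fin.lt_def] using hj)

lemma prefixBits_length {n : ℕ} (m : Fin n → Bool) (i : Fin n) :
    (prefixBits m i).length = i.val := by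
  simp [prefixBits]

lemma E0_eq_iff {n : ℕ} (m m' : Fin n → Bool) (i : Fin n) :
    E0 m i = E0 m' i ↔ (prefixBits m i = prefixBits m' i ∧ m i = m' i) := by
  unfold E0
  constructor
  · intro h
    obtain ⟨h1, h2⟩ := List.append_inj h (by rw [prefixBits_length, prefixBits_length])
    simp at h2
    exact ⟨h1, h2⟩
  · rintro ⟨h1, h2⟩; rw [h1, h2]

lemma E1_eq_E0_iff {n : ℕ} (m m' : Fin n → Bool) (i : Fin n)
    (hpre : prefixBits m i = prefixBits m' i) :
    E1 m i = E0 m' i ↔ (m i = false ∧ m' i = true) := by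
  unfold E1 E0
  rw [hpre]
  constructor
  · intro h
    have h2 := List.append_cancel_left h
    cases hmi : m i <;> simp [hmi] at h2 <;> simp_all
  · rintro ⟨h1, h2⟩; rw [h1, h2]; simp

lemma two_pow_sum_lt (t : ℕ) : ∑ j ∈ Finset.range t, 2^j < 2^t := by
  induction t with
  | zero => simp
  | succ t ih => rw [Finset.sum_range_succ, pow_succ]; omega

lemma msgVal_lt_of {n : ℕ} (m m' : Fin n → Bool) (i : Fin n)
    (h : ∀ k : Fin n, k < i → m k = m' k) (hm : m i = false) (hm' : m' i = true) :
    msgVal m < msgVal m' := by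
  classical
  unfold msgVal
  rw [← Finset.sum_filter_add_sum_filter_not Finset.univ (fun k : Fin n => k < i)
        (fun k => if m k then 2^(n-1-k.val) else 0),
      ← Finset.sum_filter_add_sum_filter_not Finset.univ (fun k : Fin n => k < i)
        (fun k => if m' k then 2^(n-1-k.val) else 0)]
  have hcommon : ∑ k ∈ Finset.univ.filter (fun k : Fin n => k < i),
      (if m k then 2^(n-1-k.val) else 0)
      = ∑ k ∈ Finset.univ.filter (fun k : Fin n => k < i),
      (if m' k then 2^(n-1-k.val) else 0) := by
    apply Finset.sum_congr rfl
    intro k hk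
    simp only [Finset.mem_filter] at hk
    rw [h k hk.2]
  rw [hcommon]
  apply Nat.add_lt_add_left
  have hset : Finset.univ.filter (fun k : Fin n => ¬ k < i)
      = insert i (Finset.univ.filter (fun k : Fin n => i < k)) := by
    ext k
    simp only [Finset.mem_filter, Finset.mem_univ, true_and, Finset.mem_insert,
      Fin.lt_def, not_lt, Fin.ext_iff]
    omega
  have hnotmem : i ∉ Finset.univ.filter (fun k : Fin n => i < k) := by simp
  rw [hset, Finset.sum_insert hnotmem, Finset.sum_insert hnotmem, hm, hm',
    if_neg (by simp), if_pos rfl, Nat.zero_add]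
  have hbij : ∑ k ∈ Finset.univ.filter (fun k : Fin n => i < k), (2:ℕ)^(n-1-k.val)
      = ∑ j ∈ Finset.range (n-1-i.val), 2^j := by
    apply Finset.sum_nbij' (i := fun k => n-1-k.val) (j := fun j => (⟨n-1-j, by have h0 := i.isLt; omega⟩ : Fin n))
    · intro k hk
      simp only [Finset.mem_filter, Fin.lt_def] at hk
      simp only [Finset.mem_range]
      have := k.isLt
      omega
    · intro j hj
      simp only [Finset.mem_range] at hj
      simp only [Finset.mem_filter, Fin.lt_def, Finset.mem_univ, true_and]
      have := i.isLt
      omega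
    · intro k hk
      simp only [Finset.mem_filter, Fin.lt_def] at hk
      have := k.isLt
      ext
      simp
      omega
    · intro j hj
      simp only [Finset.mem_range] at hj
      have := i.isLt
      simp
      omega
    · intro k _
      rfl
  calc ∑ k ∈ Finset.univ.filter (fun k : Fin n => i < k), (if m k then 2^(n-1-k.val) else 0)
      ≤ ∑ k ∈ Finset.univ.filter (fun k : Fin n => i < k), (2:ℕ)^(n-1-k.val) := by
        apply Finset.sum_le_sum
        intro k _
        split <;> simp
    _ = ∑ j ∈ Finset.range (n-1-i.val), 2^j := hbij
    _ < 2^(n-1-i.val) := two_pow_sum_lt _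
    _ ≤ 2^(n-1-i.val) + ∑ k ∈ Finset.univ.filter (fun k : Fin n => i < k),
        (if m' k then 2^(n-1-k.val) else 0) := Nat.le_add_right _ _

lemma crit_lemma {n : ℕ} (a b : Fin n → Bool) (i : Fin n)
    (hb : a i ≠ b i) (hpre : ∀ k : Fin n, k < i → a k = b k) :
    (a i = false ∧ b i = true) ↔ msgVal a < msgVal b := by
  constructor
  · rintro ⟨h1, h2⟩; exact msgVal_lt_of a b i hpre h1 h2
  · intro hlt
    cases h1 : a i
    · cases h2 : b i
      · exact absurd (h1.trans h2.symm) hb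
      · exact ⟨rfl, rfl⟩
    · have h2 : b i = false := by
        cases h2 : b i
        · rfl
        · exact absurd (h1.trans h2.symm) hb
      have := msgVal_lt_of b a i (fun k hk => (hpre k hk).symm) h2 h1
      omega

/-- correctness of the single-client comparison algorithm, where the
injective `f : List Bool → G` plays the role of the keyed hash `m ↦ H(m)^s`. -/
theorem compare_correct {G : Type*} (f : List Bool → G) (hf : Function.Injective f)
    {n : ℕ} (m m' : Fin n → Bool) :
    ((∃ istar : Fin n, f (E0 m istar) ≠ f (E0 m' istar) ∧
        ∀ k : Fin n, k < istar → f (E0 m k) = f (E0 m' k)) ↔ m ≠ m') ∧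
    (∀ istar : Fin n,
      (f (E0 m istar) ≠ f (E0 m' istar) ∧
        ∀ k : Fin n, k < istar → f (E0 m k) = f (E0 m' k)) →
      ((m istar ≠ m' istar ∧ ∀ k : Fin n, k < istar → m k = m' k) ∧
        (f (E1 m istar) = f (E0 m' istar) ↔ msgVal m < msgVal m') ∧
        (f (E0 m istar) = f (E1 m' istar) ↔ msgVal m' < msgVal m))) ∧
    ((∃ istar : Fin n,
        (f (E0 m istar) ≠ f (E0 m' istar) ∧
          ∀ k : Fin n, k < istar → f (E0 m k) = f (E0 m' k)) ∧
        f (E1 m istar) = f (E0 m' istar)) ↔ msgVal m < msgVal m') := by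
    classical
  have hE0 : ∀ i : Fin n, f (E0 m i) = f (E0 m' i) ↔
      ((∀ k : Fin n, k < i → m k = m' k) ∧ m i = m' i) := by
    intro i
    rw [hf.eq_iff, E0_eq_iff, prefixBits_eq_iff]
  have key : ∀ istar : Fin n,
      (f (E0 m istar) ≠ f (E0 m' istar) ∧
        ∀ k : Fin n, k < istar → f (E0 m k) = f (E0 m' k)) →
      (m istar ≠ m' istar ∧ ∀ k : Fin n, k < istar → m k = m' k) := by
    rintro istar ⟨hne, hmin⟩
    have hpre : ∀ k : Fin n, k < istar → m k = m' k := by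
      intro k hk
      exact ((hE0 k).mp (hmin k hk)).2
    refine ⟨?_, hpre⟩
    intro hbit
    exact hne ((hE0 istar).mpr ⟨hpre, hbit⟩)
  have hE1 : ∀ istar : Fin n, (∀ k : Fin n, k < istar → m k = m' k) →
      (f (E1 m istar) = f (E0 m' istar) ↔ (m istar = false ∧ m' istar = true)) := by
    intro istar hpre
    rw [hf.eq_iff]
    exact E1_eq_E0_iff m m' istar ((prefixBits_eq_iff m m' istar).mpr hpre)
  have hE1' : ∀ istar : Fin n, (∀ k : Fin n, k < istar → m k = m' k) →
      (f (E0 m istar) = f (E1 m' istar) ↔ (m' istar = false ∧ m istar = true)) := by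
    intro istar hpre
    rw [hf.eq_iff, eq_comm]
    exact E1_eq_E0_iff m' m istar
      ((prefixBits_eq_iff m' m istar).mpr (fun k hk => (hpre k hk).symm))
  have hex : m ≠ m' → ∃ istar : Fin n, f (E0 m istar) ≠ f (E0 m' istar) ∧
      ∀ k : Fin n, k < istar → f (E0 m k) = f (E0 m' k) := by
    intro hne
    have hexk : ∃ k, m k ≠ m' k := by
      by_contra hc
      push_neg at hc
      exact hne (funext hc)
    set s := Finset.univ.filter (fun k : Fin n => m k ≠ m' k) with hs_def
    have hs : s.Nonempty := by
      obtain ⟨k, hk⟩ := hexk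
      exact ⟨k, by simp [hs_def, hk]⟩
    have hmem := Finset.mem_filter.mp (s.min'_mem hs)
    have hpre : ∀ k : Fin n, k < s.min' hs → m k = m' k := by
      intro k hk
      by_contra hc
      exact absurd hk (not_lt.mpr (s.min'_le k (by simp [hs_def, hc])))
    refine ⟨s.min' hs, ?_, ?_⟩
    · intro hfeq
      exact hmem.2 ((hE0 _).mp hfeq).2
    · intro k hk
      exact (hE0 k).mpr ⟨fun j hj => hpre j (hj.trans hk), hpre k hk⟩
  refine ⟨⟨?_, hex⟩, ?_, ?_, ?_⟩
  · rintro ⟨i, hne, -⟩ heq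
    exact hne (by rw [heq])
  · intro istar h
    obtain ⟨hb, hpre⟩ := key istar h
    refine ⟨⟨hb, hpre⟩, ?_, ?_⟩
    · rw [hE1 istar hpre]
      exact crit_lemma m m' istar hb hpre
    · rw [hE1' istar hpre]
      exact crit_lemma m' m istar (fun hc => hb hc.symm) (fun k hk => (hpre k hk).symm)
  · rintro ⟨istar, h, heq⟩
    obtain ⟨hb, hpre⟩ := key istar h
    exact (crit_lemma m m' istar hb hpre).mp ((hE1 istar hpre).mp heq)
  · intro hlt
    have hne : m ≠ m' := by
      rintro rfl
      exact lt_irrefl _ hlt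
    obtain ⟨istar, h1, h2⟩ := hex hne
    obtain ⟨hb, hpre⟩ := key istar ⟨h1, h2⟩
    refine ⟨istar, ⟨h1, h2⟩, ?_⟩
    rw [hE1 istar hpre]
    exact (crit_lemma m m' istar hb hpre).mpr hlt
end

section
/- Correctness equalities of the multi-client comparison of the encrypted ORE scheme: let G, Ĝ, G_T be commutative groups with a bilinear map e : G → Ĝ → G_T, H : List Bool → G any function, g ∈ G, ĝ ∈ Ĝ, and integers a_j, a_k, s_j, s_k, r, along with arbitrary integers t_{i,b}, t'_{i,b} for i ∈ [n], b ∈ {0,1}. Define h_j = g^{a_j}, h_k = g^{a_k}, the ciphertexts C_{i,b,0} = H(E_b(i, m))^{s_j}·h_j^{t_{i,b}}, C_{i,b,1} = g^{t_{i,b}}, C'_{i,b,0} = H(E_b(i, m'))^{s_k}·h_k^{t'_{i,b}}, C'_{i,b,1} = g^{t'_{i,b}}, and the comparison key K_{0,0} = (ĝ^{s_j})^r, K_{0,1} = ((ĝ^{a_k})^{s_j})^r, K_{1,0} = (ĝ^{s_k})^r, K_{1,1} = ((ĝ^{a_j})^{s_k})^r. If val(m) < val(m') with i* = ind(m, m'),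 then for all i < i*: e(C_{i,0,0}, K_{1,0})·e(C_{i,0,1}, K_{1,1})^{-1} = e(C'_{i,0,0}, K_{0,0})·e(C'_{i,0,1}, K_{0,1})^{-1}, and at i*: e(C_{i*,1,0}, K_{1,0})·e(C_{i*,1,1}, K_{1,1})^{-1} = e(C'_{i*,0,0}, K_{0,0})·e(C'_{i*,0,1}, K_{0,1})^{-1}. -/
section Pairing

variable {G Ghat GT : Type*} [CommGroup G] [CommGroup Ghat] [CommGroup GT] {e : G → Ghat → GT}

theorem pairing_zpow_zpow
    (hbil₁ : ∀ (u u' : G) (v : Ghat), e (u * u') v = e u v * e u' v)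
    (hbil₂ : ∀ (u : G) (v v' : Ghat), e u (v * v') = e u v * e u v')
    (u : G) (v : Ghat) (a b : ℤ) : e (u ^ a) (v ^ b) = e u v ^ (a * b) := by
  have hleft : e (u ^ a) (v ^ b) = e u (v ^ b) ^ a :=
    map_zpow (MonoidHom.mk' (fun u => e u (v ^ b)) fun u u' => hbil₁ u u' _) u a
  have hright : e u (v ^ b) = e u v ^ b := map_zpow (MonoidHom.mk' (e u) (hbil₂ u)) v b
  rw [hleft, hright, ← zpow_mul, mul_comm]

theorem pairing_unmask
    (hbil₁ : ∀ (u u' : G) (v : Ghat), e (u * u') v = e u v * e u' v)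
    (hbil₂ : ∀ (u : G) (v v' : Ghat), e u (v * v') = e u v * e u v')
    (X g : G) (ghat : Ghat) (s a t s' r : ℤ) :
    e (X ^ s * (g ^ a) ^ t) ((ghat ^ s') ^ r) * (e (g ^ t) (((ghat ^ a) ^ s') ^ r))⁻¹
      = e X ghat ^ (s * s' * r) := by
  simp only [← zpow_mul]
  rw [hbil₁, pairing_zpow_zpow hbil₁ hbil₂, pairing_zpow_zpow hbil₁ hbil₂,
    pairing_zpow_zpow hbil₁ hbil₂, show t * (a * s' * r) = a * t * (s' * r) by ring,
    mul_inv_cancel_right, mul_assoc]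

end Pairing

theorem msgVal_succ {n : ℕ} (m : Fin (n + 1) → Bool) :
    msgVal m = (if m 0 then 2 ^ n else 0) + msgVal (Fin.tail m) := by
  rw [msgVal, Fin.sum_univ_succ, msgVal]
  congr 1
  refine Finset.sum_congr rfl fun i _ => ?_
  simp only [Fin.tail, Fin.val_succ]
  congr 2
  omega

theorem msgVal_lt_two_pow {n : ℕ} (m : Fin n → Bool) : msgVal m < 2 ^ n := by
  induction n with
  | zero => simp [msgVal]
  | succ n ih =>
    rw [msgVal_succ, pow_succ]
    have := ih (Fin.tail m)
    split <;> omega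

theorem msgVal_lt_of_first_diff {n : ℕ} {m m' : Fin n → Bool} {j : Fin n}
    (hpre : ∀ k < j, m k = m' k) (hm : m j = false) (hm' : m' j = true) :
    msgVal m < msgVal m' := by
  induction n with
  | zero => exact j.elim0
  | succ n ih =>
    rw [msgVal_succ, msgVal_succ]
    induction j using Fin.cases with
    | zero =>
      have := msgVal_lt_two_pow (Fin.tail m)
      simp only [hm, hm', Bool.false_eq_true, if_false, if_true]
      omega
    | succ j =>
      have hhead : m 0 = m' 0 := hpre 0 (Fin.succ_pos j)
      have htail : msgVal (Fin.tail m) < msgVal (Fin.tail m') :=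
        ih (fun k hk => hpre k.succ (Fin.succ_lt_succ_iff.mpr hk)) hm hm'
      rw [hhead]
      omega

theorem bits_at_first_diff_of_msgVal_lt {n : ℕ} {m m' : Fin n → Bool} {j : Fin n}
    (hlt : msgVal m < msgVal m') (hd : m j ≠ m' j) (hpre : ∀ k < j, m k = m' k) :
    m j = false ∧ m' j = true := by
  cases hm : m j <;> cases hm' : m' j
  all_goals simp only [hm, hm', ne_eq, not_true_eq_false] at hd
  · simp
  · have := msgVal_lt_of_first_diff (fun k hk => (hpre k hk).symm) hm' hm
    omega

theorem prefixBits_congr {n : ℕ} {m m' : Fin n → Bool} {i : Fin n}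
    (h : ∀ k < i, m k = m' k) : prefixBits m i = prefixBits m' i := by
  refine List.ext_getElem (by simp [prefixBits]) fun k hk _ => ?_
  have hki : k < i.val := by simpa [prefixBits] using hk
  simpa [prefixBits] using h ⟨k, by omega⟩ hki

theorem E0_congr {n : ℕ} {m m' : Fin n → Bool} {i : Fin n}
    (h : ∀ k ≤ i, m k = m' k) : E0 m i = E0 m' i := by
  rw [E0, E0, prefixBits_congr fun k hk => h k hk.le, h i le_rfl]

theorem E1_eq_E0_of_first_diff {n : ℕ} {m m' : Fin n → Bool} {i : Fin n}
    (hpre : ∀ k < i, m k = m' k) (hm : m i = false) (hm' : m' i = true) :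
    E1 m i = E0 m' i := by
  rw [E1, E0, prefixBits_congr hpre, hm, hm']
  rfl

/-- correctness equalities of the multi-client comparison of the encrypted
ORE scheme. -/
theorem eore_compareMC_equalities {G Ghat GT : Type*}
    [CommGroup G] [CommGroup Ghat] [CommGroup GT]
    (e : G → Ghat → GT)
    (hbil₁ : ∀ (u u' : G) (v : Ghat), e (u * u') v = e u v * e u' v)
    (hbil₂ : ∀ (u : G) (v v' : Ghat), e u (v * v') = e u v * e u v')
    (H : List Bool → G) (g : G) (ghat : Ghat)
    (aj ak sj sk r : ℤ)
    {n : ℕ} (t t' : Fin n → Bool → ℤ)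
    (m m' : Fin n → Bool) (hlt : msgVal m < msgVal m')
    (istar : Fin n) (hd : m istar ≠ m' istar)
    (hmin : ∀ k : Fin n, k < istar → m k = m' k) :
    (∀ i : Fin n, i < istar →
      e (H (E0 m i) ^ sj * (g ^ aj) ^ t i false) ((ghat ^ sk) ^ r)
          * (e (g ^ t i false) (((ghat ^ aj) ^ sk) ^ r))⁻¹
        = e (H (E0 m' i) ^ sk * (g ^ ak) ^ t' i false) ((ghat ^ sj) ^ r)
          * (e (g ^ t' i false) (((ghat ^ ak) ^ sj) ^ r))⁻¹) ∧
    e (H (E1 m istar) ^ sj * (g ^ aj) ^ t istar true) ((ghat ^ sk) ^ r)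
        * (e (g ^ t istar true) (((ghat ^ aj) ^ sk) ^ r))⁻¹
      = e (H (E0 m' istar) ^ sk * (g ^ ak) ^ t' istar false) ((ghat ^ sj) ^ r)
        * (e (g ^ t' istar false) (((ghat ^ ak) ^ sj) ^ r))⁻¹ := by
  obtain ⟨hm, hm'⟩ := bits_at_first_diff_of_msgVal_lt hlt hd hmin
  simp only [pairing_unmask hbil₁ hbil₂, mul_comm sj sk]
  refine ⟨fun i hi => ?_, by rw [E1_eq_E0_of_first_diff hmin hm hm']⟩
  rw [E0_congr fun k hk => hmin k (lt_of_le_of_lt hk hi)]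
end
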